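/- arXiv:2504.02977 — 2 statements merged into one kernel-verified Lean document; each statement's English description precedes it below -/
import Mathlib

section
/- Let G be a finite simple graph. Then the enhanced zero forcing number of G equals |V(G)| minus the minimum of the triangle numbers of the patterns in S_znz(G); that is, Ẑ(G) = |V(G)| − min{ tri(𝒜) : 𝒜 ∈ S_znz(G) }. -/
/-!  Common definitions: zero forcing (standard, loop, positive semidefinite),
zero-nonzero patterns, triangles, and related graph parameters. -/

variable {V : Type*}

/-- Standard zero forcing rule: with filled set `S`, the filled vertex `v` can force
its unique unfilled neighbor `u`. -/
def StdForce (G : SimpleGraph V) (S : Set V) (v u : V) : Prop :=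
  v ∈ S ∧ u ∉ S ∧ G.Adj v u ∧ ∀ w, G.Adj v w → w ∉ S → w = u

/-- Adjacency in the looping of `G` with loops at the vertices in `L`
(a vertex counts as its own neighbor iff it has a loop). -/
def LoopAdj (G : SimpleGraph V) (L : Set V) (v w : V) : Prop :=
  G.Adj v w ∨ (v = w ∧ v ∈ L)

/-- Loop zero forcing rule (the forcing vertex need not be filled): `v` can force `u`
if `u` is the only unfilled neighbor of `v` in the looping. -/
def LoopForce (G : SimpleGraph V) (L : Set V) (S : Set V) (v u : V) : Prop :=
  u ∉ S ∧ LoopAdj G L v u ∧ ∀ w, LoopAdj G L v w → w ∉ S → w = u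

/-- Positive semidefinite zero forcing rule: the filled vertex `v` can force the unfilled
vertex `u` if `u` is the only neighbor of `v` in the connected component of `u` of the
subgraph induced by the unfilled vertices. -/
def PsdForce (G : SimpleGraph V) (S : Set V) (v u : V) : Prop :=
  v ∈ S ∧ u ∉ S ∧ G.Adj v u ∧
    ∀ w, G.Adj v w → w ∉ S →
      Relation.ReflTransGen (fun a b => G.Adj a b ∧ a ∉ S ∧ b ∉ S) u w → w = u

/-- The vertices performing a force in a forcing sequence. -/
def sourcesOf (seq : List (V × V)) : Set V := {v | ∃ p ∈ seq, p.1 = v}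

/-- The vertices that get forced in a forcing sequence. -/
def targetsOf (seq : List (V × V)) : Set V := {u | ∃ p ∈ seq, p.2 = u}

/-- The filled set after performing all forces of `seq` starting from `F`. -/
def filledAfter (F : Set V) (seq : List (V × V)) : Set V := F ∪ targetsOf seq

/-- `ValidSeq rule seq F`: starting with `F` as the filled set, the sequence of forces
`seq` is permitted (each force in turn is allowed by `rule`, and each vertex forces
at most once). -/
def ValidSeq (rule : Set V → V → V → Prop) : List (V × V) → Set V → Prop
  | [], _ => True
  | (v, u) :: rest, F => rule F v u ∧ (∀ p ∈ rest, p.1 ≠ v) ∧ ValidSeq rule rest (insert u F)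

/-- `F` is a zero forcing set w.r.t. the forcing rule `rule`. -/
def IsZFSet (rule : Set V → V → V → Prop) (F : Set V) : Prop :=
  ∃ seq : List (V × V), ValidSeq rule seq F ∧ filledAfter F seq = Set.univ

/-- `F` is a zero forcing set (w.r.t. `rule`) from which `R` can be the set of vertices
that force: some (automatically complete) forcing sequence from `F` fills every vertex
and the set of vertices performing a force is exactly `R`. -/
def ForcesWith (rule : Set V → V → V → Prop) (F R : Set V) : Prop :=
  ∃ seq : List (V × V), ValidSeq rule seq F ∧ filledAfter F seq = Set.univ ∧
    sourcesOf seq = R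

/-- The zero forcing number w.r.t. a forcing rule. -/
noncomputable def Znum (rule : Set V → V → V → Prop) : ℕ :=
  sInf {n | ∃ F : Set V, IsZFSet rule F ∧ F.ncard = n}

/-- The (standard) zero forcing number `Z(G)`. -/
noncomputable def Z (G : SimpleGraph V) : ℕ := Znum (StdForce G)

/-- The zero forcing number of the looping of `G` with loops at `L`. -/
noncomputable def Zloop (G : SimpleGraph V) (L : Set V) : ℕ := Znum (LoopForce G L)

/-- The positive semidefinite zero forcing number `Z₊(G)`. -/
noncomputable def Zplus (G : SimpleGraph V) : ℕ := Znum (PsdForce G)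

/-- The enhanced zero forcing number `Ẑ(G)`: the maximum over all loopings of `G` of the
zero forcing number of the looping. -/
noncomputable def Zhat (G : SimpleGraph V) : ℕ := sSup {n | ∃ L : Set V, Zloop G L = n}

/-- `F` is a direct zero forcing set for `G`: some forcing sequence from `F` fills every
vertex and every vertex that performs a force belongs to `F`. -/
def IsDirectZFSet (G : SimpleGraph V) (F : Set V) : Prop :=
  ∃ seq : List (V × V), ValidSeq (StdForce G) seq F ∧ filledAfter F seq = Set.univ ∧
    sourcesOf seq ⊆ F

/-- The direct zero forcing number `Z_d(G)`. -/
noncomputable def Zd (G : SimpleGraph V) : ℕ :=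
  sInf {n | ∃ F : Set V, IsDirectZFSet G F ∧ F.ncard = n}

/-- A zero-nonzero pattern `Y` (entry `Y i j` means the `(i,j)` entry is `*`)
has a `k × k` submatrix that is a triangle. -/
def HasTriOfSize {ρ γ : Type*} (Y : ρ → γ → Prop) (k : ℕ) : Prop :=
  ∃ (r : Fin k → ρ) (c : Fin k → γ), Function.Injective r ∧ Function.Injective c ∧
    (∀ i, Y (r i) (c i)) ∧ ∀ i j : Fin k, i < j → ¬ Y (r i) (c j)

/-- The triangle number `tri(Y)` of a zero-nonzero pattern. -/
noncomputable def tri {ρ γ : Type*} (Y : ρ → γ → Prop) : ℕ := sSup {k | HasTriOfSize Y k}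

/-- Membership in `S_znz(G)`: off the diagonal, the pattern matches the adjacency of `G`. -/
def InSznz (G : SimpleGraph V) (A : V → V → Prop) : Prop :=
  ∀ i j : V, i ≠ j → (A i j ↔ G.Adj i j)

/-- The zero-nonzero pattern of the looping of `G` with loops at `L`. -/
def loopPattern (G : SimpleGraph V) (L : Set V) : V → V → Prop :=
  fun i j => (i = j ∧ i ∈ L) ∨ (i ≠ j ∧ G.Adj i j)

/-- The submatrix of the pattern `Y` with rows `R` and columns `C` is a triangle:
there are enumerations of `R` and `C` realizing a lower-triangular pattern with `*`
diagonal (in particular `|R| = |C|`). -/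
def SubIsTriangle {ρ γ : Type*} (Y : ρ → γ → Prop) (R : Finset ρ) (C : Finset γ) : Prop :=
  ∃ (k : ℕ) (r : Fin k → ρ) (c : Fin k → γ),
    Function.Injective r ∧ Function.Injective c ∧
    (∀ x : ρ, x ∈ R ↔ ∃ i, r i = x) ∧ (∀ y : γ, y ∈ C ↔ ∃ i, c i = y) ∧
    (∀ i, Y (r i) (c i)) ∧ ∀ i j : Fin k, i < j → ¬ Y (r i) (c j)

/-- `(R, C)` is a persistent triangle of `G`. -/
def PersistentTriangle (G : SimpleGraph V) (R C : Finset V) : Prop :=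
  ∀ A : V → V → Prop, InSznz G A → SubIsTriangle A R C

/-- `F` is a direct zero forcing set for `G` from which `R` can be the set of vertices
that force. -/
def DirectForcesWith (G : SimpleGraph V) (F R : Set V) : Prop :=
  ∃ seq : List (V × V), ValidSeq (StdForce G) seq F ∧ filledAfter F seq = Set.univ ∧
    sourcesOf seq = R ∧ R ⊆ F

/-- `(range r, range c)` is a partition of `G` according to the `m × n` pattern `Y`,
with labelings given by `r` and `c`. -/
def PartitionAccording (G : SimpleGraph V) {m n : ℕ} (Y : Fin m → Fin n → Prop)
    (r : Fin m → V) (c : Fin n → V) : Prop :=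
  Function.Injective r ∧ Function.Injective c ∧ (∀ i j, r i ≠ c j) ∧
    (∀ v : V, (∃ i, r i = v) ∨ (∃ j, c j = v)) ∧
    ∀ i j, G.Adj (r i) (c j) ↔ Y i j

/-- `F` is a zero forcing set for `G` that forces from `V1` to `V2`. -/
def ForcesFromTo (G : SimpleGraph V) (F V1 V2 : Set V) : Prop :=
  V1 ⊆ F ∧ ∃ seq : List (V × V), ValidSeq (StdForce G) seq F ∧
    filledAfter F seq = Set.univ ∧ sourcesOf seq ⊆ V1 ∧ targetsOf seq ⊆ V2

/-- `(V1, V2)` is a partition of the vertex set of `G` into two cliques. -/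
def IsCliquePartition (G : SimpleGraph V) (V1 V2 : Set V) : Prop :=
  Disjoint V1 V2 ∧ V1 ∪ V2 = Set.univ ∧ G.IsClique V1 ∧ G.IsClique V2

/-- `G` is cobipartite. -/
def Cobipartite (G : SimpleGraph V) : Prop := ∃ V1 V2 : Set V, IsCliquePartition G V1 V2

/-- `G` is the cobipartite graph associated with the pattern `Y`, via labelings `r`, `c`. -/
def CobipAssociated (G : SimpleGraph V) {m n : ℕ} (Y : Fin m → Fin n → Prop)
    (r : Fin m → V) (c : Fin n → V) : Prop :=
  PartitionAccording G Y r c ∧ G.IsClique (Set.range r) ∧ G.IsClique (Set.range c)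

/-- `z` is a critical vertex: some optimal forcing sequence neither lets `z` force
nor forces `z`. -/
def Critical (G : SimpleGraph V) (z : V) : Prop :=
  ∃ (F : Set V) (seq : List (V × V)), F.ncard = Z G ∧ ValidSeq (StdForce G) seq F ∧
    filledAfter F seq = Set.univ ∧ z ∉ sourcesOf seq ∧ z ∉ targetsOf seq

/-- `z` is an uncritical vertex: in every optimal forcing sequence, exactly one of the
following holds: `z` performs a force, or `z` gets forced. -/
def Uncritical (G : SimpleGraph V) (z : V) : Prop :=
  ∀ (F : Set V) (seq : List (V × V)), F.ncard = Z G → ValidSeq (StdForce G) seq F →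
    filledAfter F seq = Set.univ → (z ∈ sourcesOf seq ↔ z ∉ targetsOf seq)

/-- The maximum nullity `M(G)` over the field `𝔽`. -/
noncomputable def Mnum (𝔽 : Type*) [Field 𝔽] [Fintype V] [DecidableEq V]
    (G : SimpleGraph V) : ℕ :=
  sSup {k | ∃ A : Matrix V V 𝔽, A.IsSymm ∧ (∀ i j : V, i ≠ j → (A i j ≠ 0 ↔ G.Adj i j)) ∧
    k = Fintype.card V - A.rank}

/-- The minimum rank `mr_𝔽(Y)` of a zero-nonzero pattern over the field `𝔽`. -/
noncomputable def mr (𝔽 : Type*) [Field 𝔽] {m n : ℕ} (Y : Fin m → Fin n → Prop) : ℕ :=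
  sInf {k | ∃ A : Matrix (Fin m) (Fin n) 𝔽, (∀ i j, A i j ≠ 0 ↔ Y i j) ∧ A.rank = k}

/-- `G` is a `k`-tree: there is a construction ordering of the vertices in which the
first `k+1` vertices form a clique and every later vertex is adjacent among the earlier
vertices to exactly a `k`-clique. -/
def IsKTree (k : ℕ) [Fintype V] (G : SimpleGraph V) : Prop :=
  k + 1 ≤ Fintype.card V ∧ ∃ ord : V ≃ Fin (Fintype.card V),
    (∀ u v : V, (ord u : ℕ) < k + 1 → (ord v : ℕ) < k + 1 → u ≠ v → G.Adj u v) ∧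
    ∀ v : V, k + 1 ≤ (ord v : ℕ) →
      G.IsClique {u : V | (ord u : ℕ) < (ord v : ℕ) ∧ G.Adj u v} ∧
      {u : V | (ord u : ℕ) < (ord v : ℕ) ∧ G.Adj u v}.ncard = k

/-!
For a looping `Ĝ` with pattern `A`, the forces `(vᵢ, uᵢ)` of a loop zero forcing sequence, listed
in order, form a triangle of `A` with rows `vᵢ` and columns `uᵢ`: `vᵢ ~ uᵢ`, while for `i < j` the
vertex `uⱼ` is still unfilled when `vᵢ` forces, so `vᵢ ≁ uⱼ`. Conversely the rows and columns of
a triangle, read in triangular order, are a valid sequence of forces starting from the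
complement of the columns. Hence `Z(Ĝ) + tri(A) = |V|` for every looping, and the patterns in
`S_znz(G)` are exactly the patterns of the loopings of `G`.
-/

theorem List.Pairwise.injective_comp_get {α β : Type*} {l : List α} {f : α → β}
    (h : l.Pairwise fun a b => f a ≠ f b) : Function.Injective fun i => f (l.get i) := by
  intro i j hij
  by_contra hne
  rcases lt_or_gt_of_ne hne with hlt | hlt
  exacts [List.pairwise_iff_get.mp h i j hlt hij, List.pairwise_iff_get.mp h j i hlt hij.symm]

section Triangle

variable {ρ γ : Type*}

def IsTriangleList (Y : ρ → γ → Prop) (seq : List (ρ × γ)) : Prop :=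
  (∀ p ∈ seq, Y p.1 p.2) ∧ seq.Pairwise fun p q => p.1 ≠ q.1 ∧ p.2 ≠ q.2 ∧ ¬ Y p.1 q.2

theorem hasTriOfSize_iff_exists_isTriangleList {Y : ρ → γ → Prop} {k : ℕ} :
    HasTriOfSize Y k ↔ ∃ seq, IsTriangleList Y seq ∧ seq.length = k := by
  constructor
  · rintro ⟨r, c, hr, hc, hdiag, hupper⟩
    refine ⟨List.ofFn fun i => (r i, c i), ⟨?_, ?_⟩, List.length_ofFn⟩
    · simpa [List.forall_mem_ofFn_iff] using hdiag
    · rw [List.pairwise_ofFn]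
      exact fun i j hij => ⟨hr.ne hij.ne, hc.ne hij.ne, hupper i j hij⟩
  · rintro ⟨seq, ⟨hdiag, hpair⟩, rfl⟩
    exact ⟨_, _, (hpair.imp fun h => h.1).injective_comp_get,
      (hpair.imp fun h => h.2.1).injective_comp_get, fun i => hdiag _ (List.get_mem _ _),
      fun i j h => (List.pairwise_iff_get.mp hpair i j h).2.2⟩

variable [Finite ρ]

theorem bddAbove_setOf_hasTriOfSize (Y : ρ → γ → Prop) : BddAbove {k | HasTriOfSize Y k} :=
  ⟨Nat.card ρ, fun _ ⟨r, _, hr, _⟩ => by simpa using Nat.card_le_card_of_injective r hr⟩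

theorem hasTriOfSize_tri (Y : ρ → γ → Prop) : HasTriOfSize Y (tri Y) :=
  Nat.sSup_mem (s := {k | HasTriOfSize Y k}) ⟨0, Fin.elim0, Fin.elim0,
    Function.injective_of_subsingleton _, Function.injective_of_subsingleton _, fun i => i.elim0,
    fun i => i.elim0⟩ (bddAbove_setOf_hasTriOfSize Y)

theorem le_tri {Y : ρ → γ → Prop} {k : ℕ} (h : HasTriOfSize Y k) : k ≤ tri Y :=
  le_csSup (bddAbove_setOf_hasTriOfSize Y) h

end Triangle

theorem Nat.sSup_range_eq_sub_sInf_range {ι : Type*} [Nonempty ι] {f g : ι → ℕ} {n : ℕ}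
    (h : ∀ i, f i + g i = n) : sSup (Set.range f) = n - sInf (Set.range g) := by
  obtain ⟨i₀, hi₀⟩ := Nat.sInf_mem (Set.range_nonempty g)
  rw [← hi₀]
  refine IsGreatest.csSup_eq ⟨⟨i₀, by have := h i₀; omega⟩, ?_⟩
  rintro _ ⟨i, rfl⟩
  have hmin : g i₀ ≤ g i := hi₀ ▸ Nat.sInf_le ⟨i, rfl⟩
  have := h i
  have := h i₀
  omega

theorem targetsOf_cons (p : V × V) (seq : List (V × V)) :
    targetsOf (p :: seq) = insert p.2 (targetsOf seq) := by
  ext u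
  simp [targetsOf, eq_comm]

theorem targetsOf_eq_range (seq : List (V × V)) :
    targetsOf seq = Set.range fun i => (seq.get i).2 := by
  ext u
  simp [targetsOf, List.mem_iff_get]

theorem ncard_targetsOf_le (seq : List (V × V)) : (targetsOf seq).ncard ≤ seq.length := by
  rw [targetsOf_eq_range, ← Set.image_univ]
  simpa using Set.ncard_image_le (f := fun i => (seq.get i).2) (s := Set.univ)

theorem ncard_targetsOf_of_pairwise {seq : List (V × V)}
    (h : seq.Pairwise fun p q => p.2 ≠ q.2) : (targetsOf seq).ncard = seq.length := by
  rw [targetsOf_eq_range, Set.ncard_range_of_injective h.injective_comp_get, Nat.card_fin]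

theorem znum_le {rule : Set V → V → V → Prop} {F : Set V} (h : IsZFSet rule F) :
    Znum rule ≤ F.ncard :=
  Nat.sInf_le ⟨F, h, rfl⟩

theorem exists_isZFSet_ncard_eq_znum (rule : Set V → V → V → Prop) :
    ∃ F, IsZFSet rule F ∧ F.ncard = Znum rule :=
  Nat.sInf_mem (s := {n | ∃ F, IsZFSet rule F ∧ F.ncard = n})
    ⟨_, Set.univ, ⟨[], trivial, Set.univ_union _⟩, rfl⟩

section LoopForcing

variable {G : SimpleGraph V} {L : Set V}

theorem loopAdj_eq_loopPattern (G : SimpleGraph V) (L : Set V) :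
    LoopAdj G L = loopPattern G L := by
  funext v w
  apply propext
  constructor
  · rintro (h | h)
    exacts [Or.inr ⟨G.ne_of_adj h, h⟩, Or.inl h]
  · rintro (h | h)
    exacts [Or.inr h, Or.inl h.2]

theorem ValidSeq.isTriangleList_loopAdj {seq : List (V × V)} {F : Set V}
    (h : ValidSeq (LoopForce G L) seq F) :
    IsTriangleList (LoopAdj G L) seq ∧ Disjoint F (targetsOf seq) := by
  induction seq generalizing F with
  | nil => simp [IsTriangleList, targetsOf]
  | cons p rest ih =>
    obtain ⟨v, u⟩ := p
    obtain ⟨⟨huF, hvu, honly⟩, hsrc, hrest⟩ := h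
    obtain ⟨⟨hdiag, hpair⟩, hdisj⟩ := ih hrest
    rw [Set.disjoint_insert_left] at hdisj
    refine ⟨⟨List.forall_mem_cons.mpr ⟨hvu, hdiag⟩, List.pairwise_cons.mpr ⟨?_, hpair⟩⟩, ?_⟩
    · intro q hq
      have hqT : q.2 ∈ targetsOf rest := ⟨q, hq, rfl⟩
      refine ⟨(hsrc q hq).symm, fun hu : u = q.2 => hdisj.1 (hu ▸ hqT), fun hadj => ?_⟩
      exact hdisj.1 (honly q.2 hadj (Set.disjoint_right.mp hdisj.2 hqT) ▸ hqT)
    · rw [targetsOf_cons, Set.disjoint_insert_right]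
      exact ⟨huF, hdisj.2⟩

theorem IsTriangleList.validSeq_loopForce {seq : List (V × V)}
    (h : IsTriangleList (LoopAdj G L) seq) :
    ValidSeq (LoopForce G L) seq (targetsOf seq)ᶜ := by
  induction seq with
  | nil => trivial
  | cons p rest ih =>
    obtain ⟨v, u⟩ := p
    obtain ⟨hdiag, hpair⟩ := h
    rw [List.forall_mem_cons] at hdiag
    rw [List.pairwise_cons] at hpair
    have hu : u ∉ targetsOf rest := fun ⟨q, hq, hqu⟩ => (hpair.1 q hq).2.1 hqu.symm
    rw [targetsOf_cons]
    refine ⟨⟨fun h => h (Set.mem_insert _ _), hdiag.1, ?_⟩, fun q hq => (hpair.1 q hq).1.symm, ?_⟩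
    · intro w hw hwF
      rcases Set.not_notMem.mp hwF with rfl | ⟨q, hq, rfl⟩
      · rfl
      · exact absurd hw (hpair.1 q hq).2.2
    · have hfilled : insert u (insert u (targetsOf rest))ᶜ = (targetsOf rest)ᶜ := by
        ext w
        by_cases hw : w = u <;> simp [hw, hu]
      rw [hfilled]
      exact ih ⟨hdiag.2, hpair.2⟩

variable [Finite V]

theorem card_le_zloop_add_tri (G : SimpleGraph V) (L : Set V) :
    Nat.card V ≤ Zloop G L + tri (loopPattern G L) := by
  obtain ⟨F, ⟨seq, hseq, hfill⟩, hF⟩ := exists_isZFSet_ncard_eq_znum (LoopForce G L)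
  have htri : HasTriOfSize (loopPattern G L) seq.length :=
    hasTriOfSize_iff_exists_isTriangleList.mpr
      ⟨seq, loopAdj_eq_loopPattern G L ▸ hseq.isTriangleList_loopAdj.1, rfl⟩
  calc Nat.card V = (F ∪ targetsOf seq).ncard := by rw [← filledAfter, hfill, Set.ncard_univ]
    _ ≤ F.ncard + (targetsOf seq).ncard := Set.ncard_union_le _ _
    _ ≤ Zloop G L + tri (loopPattern G L) :=
      Nat.add_le_add hF.le ((ncard_targetsOf_le seq).trans (le_tri htri))

theorem zloop_add_tri_le_card (G : SimpleGraph V) (L : Set V) :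
    Zloop G L + tri (loopPattern G L) ≤ Nat.card V := by
  obtain ⟨seq, hseq, hlen⟩ :=
    hasTriOfSize_iff_exists_isTriangleList.mp (hasTriOfSize_tri (loopPattern G L))
  rw [← loopAdj_eq_loopPattern] at hseq
  have hT : (targetsOf seq).ncard = tri (loopPattern G L) :=
    hlen ▸ ncard_targetsOf_of_pairwise (hseq.2.imp fun h => h.2.1)
  have hZ : Zloop G L ≤ (targetsOf seq)ᶜ.ncard :=
    znum_le ⟨seq, hseq.validSeq_loopForce, Set.compl_union_self _⟩
  have := Set.ncard_add_ncard_compl (targetsOf seq)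
  omega

theorem zloop_add_tri (G : SimpleGraph V) (L : Set V) :
    Zloop G L + tri (loopPattern G L) = Nat.card V :=
  (zloop_add_tri_le_card G L).antisymm (card_le_zloop_add_tri G L)

end LoopForcing

theorem setOf_inSznz_eq_range_loopPattern (G : SimpleGraph V) :
    {A | InSznz G A} = Set.range (loopPattern G) := by
  ext A
  constructor
  · intro hA
    refine ⟨{i | A i i}, funext fun i => funext fun j => propext ?_⟩
    by_cases hij : i = j
    · subst hij
      simp [loopPattern]
    · simp [loopPattern, hij, hA i j hij]
  · rintro ⟨L, rfl⟩ i j hij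
    simp [loopPattern, hij]

theorem enhanced_zero_forcing_eq_card_sub_min_tri_general
    {V : Type*} [Fintype V] (G : SimpleGraph V) :
    Zhat G = Fintype.card V - sInf {k | ∃ A : V → V → Prop, InSznz G A ∧ tri A = k} := by
  have htri : {k | ∃ A : V → V → Prop, InSznz G A ∧ tri A = k} =
      Set.range fun L => tri (loopPattern G L) := by
    change tri '' {A | InSznz G A} = _
    rw [setOf_inSznz_eq_range_loopPattern, ← Set.range_comp]
    rfl
  rw [htri, ← Nat.card_eq_fintype_card]
  exact Nat.sSup_range_eq_sub_sInf_range (zloop_add_tri G)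

/-- `Ẑ(G) = |V(G)| − min{ tri(𝒜) : 𝒜 ∈ S_znz(G) }`. -/
theorem enhanced_zero_forcing_eq_card_sub_min_tri
    {V : Type*} [Fintype V] [DecidableEq V] (G : SimpleGraph V) :
    Zhat G = Fintype.card V - sInf {k | ∃ A : V → V → Prop, InSznz G A ∧ tri A = k} :=
  enhanced_zero_forcing_eq_card_sub_min_tri_general G
end

section
/- Let G be a finite simple graph with F, R ⊆ V(G). The following are equivalent: (1) F is a zero forcing set for G from which R can be the set of vertices that force (under the standard zero forcing rule); (2) for every looping Ĝ of G, F is a loop zero forcing set for Ĝ from which R can be the set of vertices that force. -/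
/-!  Common definitions: zero forcing (standard, loop, positive semidefinite),
zero-nonzero patterns, triangles, and related graph parameters. -/

variable {V : Type*}

/-!
A standard force is a loop force in every looping, which gives one direction. For the other,
look at the looping with loops exactly at the unfilled vertices. Its first force `v → u` cannot
be a self-force of an unfilled `v`: then every neighbour of `v` would already be filled, and in
the loopless looping `v` (which lies in `R`) could never force. So `v` is filled and `v → u` is
a standard force. In every looping it is then the only force `v` can ever perform, and forces
stay valid as the filled set grows, so each of the given loop sequences can be reordered to
start with `v → u`. This reduces the claim to `insert u F` and `R \ {v}`.
-/

section Sequences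

variable {rule : Set V → V → V → Prop}

lemma sourcesOf_cons (p : V × V) (seq : List (V × V)) :
    sourcesOf (p :: seq) = insert p.1 (sourcesOf seq) := by
  ext x
  simp [sourcesOf, eq_comm]

lemma filledAfter_cons (F : Set V) (v u : V) (seq : List (V × V)) :
    filledAfter F ((v, u) :: seq) = filledAfter (insert u F) seq := by
  ext x
  simp [filledAfter, targetsOf, eq_comm, or_left_comm, or_assoc]

lemma List.Perm.sourcesOf_eq {s t : List (V × V)} (h : s.Perm t) :
    sourcesOf s = sourcesOf t := by
  ext x
  simp [sourcesOf, h.mem_iff]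

lemma List.Perm.filledAfter_eq (F : Set V) {s t : List (V × V)} (h : s.Perm t) :
    filledAfter F s = filledAfter F t := by
  ext x
  simp [filledAfter, targetsOf, h.mem_iff]

lemma ValidSeq.mono {rule' : Set V → V → V → Prop}
    (h : ∀ S v u, rule S v u → rule' S v u) :
    ∀ {seq : List (V × V)} {S : Set V}, ValidSeq rule seq S → ValidSeq rule' seq S
  | [], _, _ => trivial
  | (_, _) :: _, _, hseq => ⟨h _ _ _ hseq.1, hseq.2.1, hseq.2.2.mono h⟩

lemma ValidSeq.exists_rule_of_mem :
    ∀ {seq : List (V × V)} {S : Set V}, ValidSeq rule seq S → ∀ p ∈ seq,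
      ∃ S', S ⊆ S' ∧ rule S' p.1 p.2
  | (_, _) :: _, S, hseq, p, hp => by
    rcases List.mem_cons.mp hp with rfl | hp
    · exact ⟨S, subset_rfl, hseq.1⟩
    · obtain ⟨S', hS', hrule⟩ := hseq.2.2.exists_rule_of_mem p hp
      exact ⟨S', (Set.subset_insert _ S).trans hS', hrule⟩

lemma ValidSeq.exists_perm_cons
    (hmono : ∀ ⦃S S' v u⦄, rule S v u → S ⊆ S' → u ∉ S' → rule S' v u)
    (htarget : ∀ ⦃S v u⦄, rule S v u → u ∉ S) {v u : V} :
    ∀ {seq : List (V × V)} {S : Set V}, ValidSeq rule seq S → (v, u) ∈ seq → rule S v u →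
      ∃ rest, ((v, u) :: rest).Perm seq ∧ ValidSeq rule ((v, u) :: rest) S
  | (a, b) :: seq, S, hseq, hmem, hvu => by
    by_cases hab : (a, b) = (v, u)
    · exact ⟨seq, hab ▸ List.Perm.refl _, hab ▸ hseq⟩
    have hmem : (v, u) ∈ seq := (List.mem_cons.mp hmem).resolve_left (Ne.symm hab)
    have hu : u ∉ insert b S := by
      obtain ⟨S', hS', hrule⟩ := hseq.2.2.exists_rule_of_mem _ hmem
      exact fun h => htarget hrule (hS' h)
    obtain ⟨rest, hperm, hrest⟩ :=
      hseq.2.2.exists_perm_cons hmono htarget hmem (hmono hvu (Set.subset_insert _ _) hu)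
    have hb : b ∉ insert u S := by
      rintro (rfl | hbS)
      · exact hu (Set.mem_insert _ _)
      · exact htarget hseq.1 hbS
    refine ⟨(a, b) :: rest, (List.Perm.swap _ _ _).trans (hperm.cons _), hvu, ?_, ?_, ?_, ?_⟩
    · intro p hp
      rcases List.mem_cons.mp hp with rfl | hp
      · exact fun hav => hseq.2.1 _ hmem hav.symm
      · exact hrest.2.1 p hp
    · exact hmono hseq.1 (Set.subset_insert _ _) hb
    · exact fun p hp => hseq.2.1 p (hperm.subset (List.mem_cons_of_mem _ hp))
    · simpa only [Set.insert_comm] using hrest.2.2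

lemma ForcesWith.mono {rule' : Set V → V → V → Prop}
    (h : ∀ S v u, rule S v u → rule' S v u) {F R : Set V} :
    ForcesWith rule F R → ForcesWith rule' F R
  | ⟨seq, hseq, hfill, hsrc⟩ => ⟨seq, hseq.mono h, hfill, hsrc⟩

lemma ForcesWith.cons {F R : Set V} {v u : V} (hvu : rule F v u) (hv : v ∈ R)
    (h : ForcesWith rule (insert u F) (R \ {v})) : ForcesWith rule F R := by
  obtain ⟨seq, hseq, hfill, hsrc⟩ := h
  refine ⟨(v, u) :: seq, ⟨hvu, fun p hp hpv => ?_, hseq⟩, ?_, ?_⟩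
  · have hp : p.1 ∈ R \ {v} := hsrc ▸ ⟨p, hp, rfl⟩
    exact hp.2 hpv
  · rwa [filledAfter_cons]
  · rw [sourcesOf_cons, hsrc, Set.insert_sdiff_singleton, Set.insert_eq_of_mem hv]

lemma ForcesWith.insert_sdiff
    (hmono : ∀ ⦃S S' v u⦄, rule S v u → S ⊆ S' → u ∉ S' → rule S' v u)
    (htarget : ∀ ⦃S v u⦄, rule S v u → u ∉ S)
    {F R : Set V} {v u : V} (h : ForcesWith rule F R) (hv : v ∈ R) (hvu : rule F v u)
    (huniq : ∀ S w, F ⊆ S → rule S v w → w = u) :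
    ForcesWith rule (insert u F) (R \ {v}) := by
  obtain ⟨seq, hseq, hfill, rfl⟩ := h
  obtain ⟨p, hmem, hpv⟩ := hv
  obtain ⟨S, hFS, hrule⟩ := hseq.exists_rule_of_mem p hmem
  obtain rfl : p = (v, u) := Prod.ext hpv (huniq S p.2 hFS (hpv ▸ hrule))
  obtain ⟨rest, hperm, hrest⟩ := hseq.exists_perm_cons hmono htarget hmem hvu
  have hv : v ∉ sourcesOf rest := fun ⟨p, hp, hpv⟩ => hrest.2.1 p hp hpv
  refine ⟨rest, hrest.2.2, ?_, ?_⟩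
  · rwa [← filledAfter_cons, hperm.filledAfter_eq]
  · rw [← hperm.sourcesOf_eq, sourcesOf_cons, Set.insert_sdiff_self_of_notMem hv]

end Sequences

section Loopings

variable {G : SimpleGraph V} {L S : Set V} {v u : V}

lemma LoopForce.mono {S' : Set V} (h : LoopForce G L S v u) (hSS' : S ⊆ S') (hu : u ∉ S') :
    LoopForce G L S' v u :=
  ⟨hu, h.2.1, fun w hw hwS' => h.2.2 w hw fun hwS => hwS' (hSS' hwS)⟩

lemma StdForce.loopForce (h : StdForce G S v u) : LoopForce G L S v u := by
  refine ⟨h.2.1, Or.inl h.2.2.1, ?_⟩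
  rintro w (hvw | ⟨rfl, -⟩) hwS
  · exact h.2.2.2 w hvw hwS
  · exact absurd h.1 hwS

lemma StdForce.eq_of_loopForce {S' : Set V} {w : V} (h : StdForce G S v u) (hSS' : S ⊆ S')
    (hw : LoopForce G L S' v w) : w = u := by
  rcases hw.2.1 with hvw | ⟨rfl, -⟩
  · exact h.2.2.2 w hvw fun hwS => hw.1 (hSS' hwS)
  · exact absurd (hSS' h.1) hw.1

lemma LoopForce.stdForce_of_mem (h : LoopForce G L S v u) (hv : v ∈ S) : StdForce G S v u := by
  have hvu : G.Adj v u := h.2.1.resolve_right fun ⟨hvu, _⟩ => h.1 (hvu ▸ hv)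
  exact ⟨hv, h.1, hvu, fun w hw hwS => h.2.2 w (Or.inl hw) hwS⟩

/-- A looped unfilled vertex is one of its own unfilled neighbours, so it admits no other. -/
lemma LoopForce.mem_of_adj_of_mem_loops (h : LoopForce G L S v u) (hvL : v ∈ L) (hvS : v ∉ S)
    {w : V} (hvw : G.Adj v w) : w ∈ S := by
  by_contra hwS
  have hwu := h.2.2 w (Or.inl hvw) hwS
  have hvu := h.2.2 v (Or.inr ⟨rfl, hvL⟩) hvS
  rw [hwu, ← hvu] at hvw
  exact G.loopless.irrefl v hvw

lemma ForcesWith.exists_adj_notMem {F R : Set V} (h : ForcesWith (LoopForce G L) F R)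
    (hvL : v ∉ L) (hvR : v ∈ R) : ∃ w, G.Adj v w ∧ w ∉ F := by
  obtain ⟨seq, hseq, -, rfl⟩ := h
  obtain ⟨p, hp, rfl⟩ := hvR
  obtain ⟨S', hFS', hrule⟩ := hseq.exists_rule_of_mem p hp
  rcases hrule.2.1 with hadj | ⟨-, hpL⟩
  · exact ⟨p.2, hadj, fun hF => hrule.1 (hFS' hF)⟩
  · exact absurd hpL hvL

theorem forcesWith_stdForce_of_forall_loopForce [Finite V] (G : SimpleGraph V) (F R : Set V)
    (H : ∀ L, ForcesWith (LoopForce G L) F R) : ForcesWith (StdForce G) F R := by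
  obtain ⟨_ | ⟨⟨v, u⟩, rest⟩, hseq, hfill, hsrc⟩ := H Fᶜ
  · exact ⟨[], trivial, hfill, hsrc⟩
  have hvR : v ∈ R := hsrc ▸ ⟨(v, u), List.mem_cons_self, rfl⟩
  have hvF : v ∈ F := by
    by_contra hvF
    obtain ⟨w, hvw, hwF⟩ := (H ∅).exists_adj_notMem (Set.notMem_empty v) hvR
    exact hwF (hseq.1.mem_of_adj_of_mem_loops hvF hvF hvw)
  have hvu : StdForce G F v u := hseq.1.stdForce_of_mem hvF
  refine ForcesWith.cons hvu hvR (forcesWith_stdForce_of_forall_loopForce G _ _ fun L => ?_)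
  exact (H L).insert_sdiff (fun _ _ _ _ h => h.mono) (fun _ _ _ h => h.1) hvR hvu.loopForce
    fun _ _ hFS hw => hvu.eq_of_loopForce hFS hw
termination_by Fᶜ.ncard
decreasing_by
  exact Set.ncard_lt_ncard (compl_lt_compl_iff_lt.mpr (Set.ssubset_insert hvu.2.1))

end Loopings

theorem std_forcing_iff_all_loopings_general
    {V : Type*} [Fintype V] (G : SimpleGraph V) (F R : Set V) :
    ForcesWith (StdForce G) F R ↔ ∀ L : Set V, ForcesWith (LoopForce G L) F R :=
  ⟨fun h _ => h.mono fun _ _ _ => StdForce.loopForce,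
    forcesWith_stdForce_of_forall_loopForce G F R⟩

/-- `F` is a zero forcing set for `G` from which `R` can be the set of
vertices that force iff, for every looping of `G`, `F` is a loop zero forcing set from
which `R` can be the set of vertices that force. -/
theorem std_forcing_iff_all_loopings
    {V : Type*} [Fintype V] [DecidableEq V] (G : SimpleGraph V) (F R : Set V) :
    ForcesWith (StdForce G) F R ↔ ∀ L : Set V, ForcesWith (LoopForce G L) F R :=
  std_forcing_iff_all_loopings_general G F R
end
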